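/- arXiv:1602.01304 — 2 statements merged into one kernel-verified Lean document; each statement's English description precedes it below -/
import Mathlib

section
/- For every nonnegative integer n, the determinant of the n×n matrix with (i,j) entry 1/(2i+2j−3) (for 1 ≤ i,j ≤ n) equals (1/2^n) · Π_{i=1}^n ((i−1)!)² / (i−1/2)_n. -/
/-!
The matrix is the Cauchy matrix `1 / (x i + y j)` with `x i = 2 i + 1`, `y j = 2 j` (indices from
`0`). Taking the Schur complement of the bottom-right entry of a Cauchy matrix gives, up to
diagonal scalings by `(x n - x i) / (x i + y n)` and `(y n - y j) / (x n + y j)`, the Cauchy matrix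
of one size smaller, whence Cauchy's formula
`det = ∏_{i<j} (x j - x i) (y j - y i) / ∏_{i,j} (x i + y j)` by induction. For our choice the
numerator is `∏_j 4^j (j!)^2` and the row products `∏_j (x i + y j)` are `2^n (i + 1/2)_n`.
-/

open Matrix Finset

theorem Matrix.det_succ_eq_mul_det_schur {K : Type*} [Field K] {n : ℕ}
    (M : Matrix (Fin (n + 1)) (Fin (n + 1)) K) (h : M (Fin.last n) (Fin.last n) ≠ 0) :
    M.det = M (Fin.last n) (Fin.last n) * det (of fun i j : Fin n =>
      M i.castSucc j.castSucc -
        M i.castSucc (Fin.last n) * M (Fin.last n) j.castSucc / M (Fin.last n) (Fin.last n)) := by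
  set N := M.submatrix finSumFinEquiv finSumFinEquiv
  have hlast : Fin.natAdd n (0 : Fin 1) = Fin.last n := rfl
  have hD : N.toBlocks₂₂.det = M (Fin.last n) (Fin.last n) := by
    simp [N, det_unique, toBlocks₂₂, hlast]
  let := N.toBlocks₂₂.invertibleOfIsUnitDet (hD ▸ h.isUnit)
  have hN : M.det = N.det := (det_submatrix_equiv_self _ M).symm
  rw [hN, ← fromBlocks_toBlocks N, det_fromBlocks₂₂, hD, invOf_eq_nonsing_inv, inv_subsingleton]
  congr 2
  ext i j
  simp only [N, toBlocks₁₁, toBlocks₁₂, toBlocks₂₁, toBlocks₂₂, submatrix_apply, of_apply,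
    finSumFinEquiv_apply_left, finSumFinEquiv_apply_right, sub_apply, mul_apply, univ_unique,
    sum_singleton, Fin.default_eq_zero, diagonal_apply_eq, Ring.inverse_eq_inv', hlast,
    Fin.castSucc]
  ring

namespace Matrix

variable {K : Type*} [Field K] (x y : ℕ → K)

def cauchy (n : ℕ) : Matrix (Fin n) (Fin n) K :=
  of fun i j => 1 / (x i + y j)

theorem det_cauchy_succ {n : ℕ} (h : ∀ i ≤ n, ∀ j ≤ n, x i + y j ≠ 0) :
    (cauchy x y (n + 1)).det =
      (x n + y n)⁻¹ * (∏ i ∈ range n, (x n - x i) / (x i + y n)) *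
        (∏ j ∈ range n, (y n - y j) / (x n + y j)) * (cauchy x y n).det := by
  have hlast : ((Fin.last n : Fin (n + 1)) : ℕ) = n := Fin.val_last n
  have hschur : (of fun i j : Fin n =>
      cauchy x y (n + 1) i.castSucc j.castSucc - cauchy x y (n + 1) i.castSucc (Fin.last n) *
        cauchy x y (n + 1) (Fin.last n) j.castSucc / cauchy x y (n + 1) (Fin.last n) (Fin.last n)) =
      diagonal (fun i : Fin n => (x n - x i) / (x i + y n)) * cauchy x y n *
        diagonal (fun j : Fin n => (y n - y j) / (x n + y j)) := by
    ext i j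
    have hij := h i i.is_lt.le j j.is_lt.le
    have hin := h i i.is_lt.le n le_rfl
    have hnj := h n le_rfl j j.is_lt.le
    simp only [cauchy, mul_diagonal, diagonal_mul, of_apply, Fin.val_castSucc, hlast]
    field_simp
    ring
  have hcorner : cauchy x y (n + 1) (Fin.last n) (Fin.last n) = (x n + y n)⁻¹ := by
    simp [cauchy]
  rw [det_succ_eq_mul_det_schur _ (hcorner ▸ inv_ne_zero (h n le_rfl n le_rfl)), hschur, hcorner,
    det_mul, det_mul, det_diagonal, det_diagonal,
    Fin.prod_univ_eq_prod_range (fun i => (x n - x i) / (x i + y n)),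
    Fin.prod_univ_eq_prod_range (fun j => (y n - y j) / (x n + y j))]
  ring

theorem det_cauchy {n : ℕ} (h : ∀ i < n, ∀ j < n, x i + y j ≠ 0) :
    (cauchy x y n).det =
      (∏ j ∈ range n, ∏ i ∈ range j, (x j - x i) * (y j - y i)) /
        ∏ i ∈ range n, ∏ j ∈ range n, (x i + y j) := by
  induction n with
  | zero => simp
  | succ n ih =>
    have h' : ∀ i ≤ n, ∀ j ≤ n, x i + y j ≠ 0 := fun i hi j hj =>
      h i (Nat.lt_succ_of_le hi) j (Nat.lt_succ_of_le hj)
    have hnum : ∏ j ∈ range (n + 1), ∏ i ∈ range j, (x j - x i) * (y j - y i) =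
        (∏ j ∈ range n, ∏ i ∈ range j, (x j - x i) * (y j - y i)) *
          ((∏ i ∈ range n, (x n - x i)) * ∏ i ∈ range n, (y n - y i)) := by
      rw [prod_range_succ, prod_mul_distrib]
    have hden : ∏ i ∈ range (n + 1), ∏ j ∈ range (n + 1), (x i + y j) =
        (∏ i ∈ range n, ∏ j ∈ range n, (x i + y j)) * (∏ i ∈ range n, (x i + y n)) *
          ((∏ j ∈ range n, (x n + y j)) * (x n + y n)) := by
      rw [prod_range_succ, prod_range_succ, ← prod_mul_distrib]
      simp only [prod_range_succ]
    have h₁ : ∏ i ∈ range n, ∏ j ∈ range n, (x i + y j) ≠ 0 :=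
      prod_ne_zero_iff.2 fun i hi => prod_ne_zero_iff.2 fun j hj =>
        h' i (mem_range.1 hi).le j (mem_range.1 hj).le
    have h₂ : ∏ i ∈ range n, (x i + y n) ≠ 0 :=
      prod_ne_zero_iff.2 fun i hi => h' i (mem_range.1 hi).le n le_rfl
    have h₃ : ∏ j ∈ range n, (x n + y j) ≠ 0 :=
      prod_ne_zero_iff.2 fun j hj => h' n le_rfl j (mem_range.1 hj).le
    have h₄ := h' n le_rfl n le_rfl
    rw [det_cauchy_succ x y h', ih fun i hi j hj => h' i hi.le j hj.le, hnum, hden,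
      prod_div_distrib, prod_div_distrib]
    field_simp

end Matrix

theorem ascPochhammer_eval_eq_prod_range {R : Type*} [CommSemiring R] (n : ℕ) (r : R) :
    (ascPochhammer R n).eval r = ∏ j ∈ range n, (r + j) := by
  induction n with
  | zero => simp
  | succ n ih => rw [ascPochhammer_succ_eval, prod_range_succ, ih]

theorem prod_range_natCast_sub_eq_factorial {R : Type*} [CommRing R] (n : ℕ) :
    ∏ i ∈ range n, ((n : R) - i) = n.factorial := by
  rw [← descPochhammer_eval_eq_prod_range, descPochhammer_eval_eq_descFactorial,
    Nat.descFactorial_self]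

theorem prod_range_four_pow_mul_two_pow {R : Type*} [CommSemiring R] (n : ℕ) :
    (∏ j ∈ range n, (4 : R) ^ j) * 2 ^ n = (2 ^ n) ^ n := by
  rw [prod_pow_eq_pow_sum, show (4 : R) = 2 ^ 2 by norm_num, ← pow_mul, ← pow_add, ← pow_mul]
  congr 1
  have := sum_range_id_mul_two n
  rcases n with _ | n
  · rfl
  · simp only [Nat.add_sub_cancel] at this
    linarith

/-- `det_{1≤i,j≤n} (1/(2i+2j−3)) = (1/2^n) Π_{i=1}^n ((i−1)!)² / (i−1/2)_n`. -/
theorem det_cauchy1 (n : ℕ) :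
    Matrix.det (Matrix.of (fun i j : Fin n =>
      (1 : ℝ) / (2 * ((i : ℕ) + 1 : ℝ) + 2 * ((j : ℕ) + 1 : ℝ) - 3)))
    = (1 / 2 ^ n) * ∏ i ∈ Finset.range n,
        ((Nat.factorial i : ℝ) ^ 2 /
          (ascPochhammer ℝ n).eval (((i : ℝ) + 1) - 1 / 2)) := by
  have hmat : Matrix.of (fun i j : Fin n =>
      (1 : ℝ) / (2 * ((i : ℕ) + 1 : ℝ) + 2 * ((j : ℕ) + 1 : ℝ) - 3)) =
      cauchy (fun i : ℕ => (2 * i + 1 : ℝ)) (fun j : ℕ => (2 * j : ℝ)) n := by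
    ext i j
    simp only [cauchy, of_apply]
    ring_nf
  have hnum : ∀ j : ℕ, ∏ i ∈ range j, ((2 * j + 1 : ℝ) - (2 * i + 1)) * (2 * j - 2 * i) =
      4 ^ j * (j.factorial : ℝ) ^ 2 := fun j =>
    calc _ = ∏ i ∈ range j, 4 * ((j : ℝ) - i) ^ 2 := prod_congr rfl fun i _ => by ring
      _ = _ := by
        rw [prod_mul_distrib, prod_const, card_range, prod_pow, prod_range_natCast_sub_eq_factorial]
  have hden : ∀ i : ℕ, ∏ j ∈ range n, ((2 * i + 1 : ℝ) + 2 * j) =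
      2 ^ n * (ascPochhammer ℝ n).eval ((i : ℝ) + 1 - 1 / 2) := fun i =>
    calc _ = ∏ j ∈ range n, 2 * ((i : ℝ) + 1 - 1 / 2 + j) := prod_congr rfl fun j _ => by ring
      _ = _ := by rw [prod_mul_distrib, prod_const, card_range, ascPochhammer_eval_eq_prod_range]
  rw [hmat, det_cauchy _ _ fun i _ j _ => by positivity]
  simp only [hnum, hden]
  rw [prod_mul_distrib, prod_mul_distrib, prod_const, card_range, prod_div_distrib,
    ← prod_range_four_pow_mul_two_pow, mul_assoc, mul_div_mul_left _ _ (by positivity)]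
  ring
end

section
/- Let n be a nonnegative integer and λ ∈ ℝ with λ > (1/2)·f_1(n). Then λ·f_j(n) > f_{j+1}(n) for all integers j with 1 ≤ j ≤ ν(n)−1, where ν(n) = ⌊n/2⌋. -/
/-!
With `a = n (n + 1)`, consecutive coefficients satisfy
`f_{j+1}(n) / f_j(n) = (a - (2j+1)(2j+2)) (a - 2j(2j+1)) / (4 (2j+1)(2j+2))`,
while `f_1(n) / 2 = (a - 2) a / 16`. For `j ≥ 1` and `2j ≤ n` the first factor of the numerator
is at most `a - 2`, the second lies in `[0, a]`, and the denominator is at least `16`.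
-/

/-- The coefficient `f_j(n) = (n−2j+1)_{4j} / (4^j (2j)!)` from the paper. -/
noncomputable def fcoef (j n : ℕ) : ℝ :=
  (ascPochhammer ℝ (4 * j)).eval ((n : ℝ) - 2 * (j : ℝ) + 1) /
    (4 ^ j * (Nat.factorial (2 * j) : ℝ))

open Polynomial

section Pochhammer

variable {S : Type*} [CommSemiring S]

theorem ascPochhammer_succ_eval_left (m : ℕ) (y : S) :
    (ascPochhammer S (m + 1)).eval y = y * (ascPochhammer S m).eval (y + 1) := by
  simp [ascPochhammer_succ_left, eval_comp]

theorem ascPochhammer_add_four_eval (m : ℕ) (y : S) :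
    (ascPochhammer S (m + 4)).eval y =
      y * (y + 1) * (ascPochhammer S m).eval (y + 2) * (y + 2 + m) * (y + 2 + m + 1) := by
  rw [ascPochhammer_succ_eval, ascPochhammer_succ_eval, ascPochhammer_succ_eval_left,
    ascPochhammer_succ_eval_left, add_assoc y 1 1, one_add_one_eq_two]
  push_cast
  ring

end Pochhammer

noncomputable def fcoefRatio (J N : ℝ) : ℝ :=
  (N - 2 * J - 1) * (N - 2 * J) * (N + 2 * J + 1) * (N + 2 * J + 2) /
    (4 * (2 * J + 1) * (2 * J + 2))

theorem fcoef_succ (j n : ℕ) : fcoef (j + 1) n = fcoef j n * fcoefRatio j n := by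
  have hfac : ((2 * (j + 1)).factorial : ℝ) = (2 * j + 2) * (2 * j + 1) * (2 * j).factorial := by
    rw [show 2 * (j + 1) = 2 * j + 1 + 1 by ring, Nat.factorial_succ, Nat.factorial_succ]
    push_cast
    ring
  rw [fcoef, fcoef, fcoefRatio, show 4 * (j + 1) = 4 * j + 4 by ring,
    ascPochhammer_add_four_eval, hfac,
    show (n : ℝ) - 2 * ((j + 1 : ℕ) : ℝ) + 1 + 2 = n - 2 * j + 1 by push_cast; ring]
  push_cast
  field_simp
  ring

theorem fcoef_one (n : ℕ) : fcoef 1 n = (n - 1) * n * (n + 1) * (n + 2) / 8 := by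
  rw [fcoef, ascPochhammer_add_four_eval]
  norm_num
  ring

theorem fcoef_pos {j n : ℕ} (h : 2 * j ≤ n) : 0 < fcoef j n := by
  have : (2 * j : ℝ) ≤ n := by exact_mod_cast h
  exact div_pos (ascPochhammer_pos _ _ (by linarith)) (by positivity)

theorem fcoefRatio_le {J N : ℝ} (hJ : 1 ≤ J) (hN : 2 * J ≤ N) :
    fcoefRatio J N ≤ (N - 1) * N * (N + 1) * (N + 2) / 16 := by
  set a := N * (N + 1)
  have ha : 2 * J * (2 * J + 1) ≤ a := by nlinarith
  have ha2 : 2 ≤ a := by nlinarith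
  have hnum : (N - 2 * J - 1) * (N - 2 * J) * (N + 2 * J + 1) * (N + 2 * J + 2) ≤ (a - 2) * a := by
    calc _ = (a - (2 * J + 1) * (2 * J + 2)) * (a - 2 * J * (2 * J + 1)) := by ring
      _ ≤ (a - 2) * a := by gcongr <;> nlinarith
  rw [fcoefRatio, div_le_div_iff₀ (by positivity) (by positivity)]
  calc _ ≤ (a - 2) * a * 16 := by gcongr
    _ ≤ (a - 2) * a * (4 * (2 * J + 1) * (2 * J + 2)) := by gcongr; nlinarith
    _ = _ := by ring

/-- If `λ > (1/2) f_1(n)` then `λ f_j(n) > f_{j+1}(n)` for all `1 ≤ j ≤ ν(n)−1`,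
where `ν(n) = ⌊n/2⌋` (the condition `j ≤ ν(n)−1` is expressed as `j + 1 ≤ n/2`). -/
theorem fcoef_ratio (n : ℕ) (lam : ℝ) (hlam : lam > (1 / 2) * fcoef 1 n)
    (j : ℕ) (hj1 : 1 ≤ j) (hj2 : j + 1 ≤ n / 2) :
    lam * fcoef j n > fcoef (j + 1) n := by
  have hn : (2 * j : ℝ) ≤ n := by exact_mod_cast (by omega : 2 * j ≤ n)
  have hratio : fcoefRatio j n < lam := by
    have := fcoefRatio_le (by exact_mod_cast hj1) hn
    rw [fcoef_one] at hlam
    linarith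
  rw [fcoef_succ, mul_comm lam]
  exact mul_lt_mul_of_pos_left hratio (fcoef_pos (by omega))
end
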